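/- arXiv:0906.0071 — 2 statements merged into one kernel-verified Lean document; each statement's English description precedes it below -/
import Mathlib

section
/- Every connected unit disk graph has a spanning tree of maximum degree at most 26. -/
/-!
Let `T` be a connected spanning subgraph of `G` of minimum total edge length; since all lengths
are positive, `T` is a tree. If `a ≠ b` are `T`-neighbours of `v`, then `|va| ≤ |ab|`: either
`|ab| > r ≥ |va|`, or `ab` is an edge of `G`, and then `|ab| < |va|` would let us shorten `T`
by replacing `va` with `ab`.
Hence the unit vectors from `v` towards its neighbours are pairwise at distance at least `1`, so
the disjoint balls of radius `1/2` around them fit in a ball of radius `3/2`, and by comparing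
areas there are at most `9` of them.
-/

namespace SimpleGraph

variable {V : Type*} [Finite V] (w : Sym2 V → ℝ)

noncomputable def edgeWeight (H : SimpleGraph V) : ℝ :=
  ∑ e ∈ H.edgeSet.toFinite.toFinset, w e

lemma edgeWeight_deleteEdges_singleton {H : SimpleGraph V} {e : Sym2 V} (he : e ∈ H.edgeSet) :
    edgeWeight w (H.deleteEdges {e}) = edgeWeight w H - w e := by
  classical
  have hset : (H.deleteEdges {e}).edgeSet.toFinite.toFinset =
      H.edgeSet.toFinite.toFinset.erase e := by
    ext; simp [edgeSet_deleteEdges, and_comm]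
  rw [edgeWeight, edgeWeight, hset, Finset.sum_erase_eq_sub (by simpa using he)]

lemma edgeWeight_sup_edge_le (H : SimpleGraph V) {a b : V} (hab : 0 ≤ w s(a, b)) :
    edgeWeight w (H ⊔ edge a b) ≤ edgeWeight w H + w s(a, b) := by
  classical
  have hsub : (H ⊔ edge a b).edgeSet.toFinite.toFinset ⊆
      insert s(a, b) H.edgeSet.toFinite.toFinset := by
    intro e
    simp only [Set.Finite.mem_toFinset, edgeSet_sup, Set.mem_union, Finset.mem_insert]
    exact fun h => (h.imp_right fun h => edgeSet_edge_subset h).symm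
  calc edgeWeight w (H ⊔ edge a b) ≤ ∑ e ∈ insert s(a, b) H.edgeSet.toFinite.toFinset, w e :=
        Finset.sum_le_sum_of_subset_of_nonneg hsub fun e he he' => by
          obtain rfl | he := Finset.mem_insert.1 he
          · exact hab
          · exact absurd (by simp_all [edgeSet_sup]) he'
    _ ≤ edgeWeight w H + w s(a, b) := by
        by_cases h : s(a, b) ∈ H.edgeSet.toFinite.toFinset
        · rw [Finset.insert_eq_of_mem h, edgeWeight]; linarith
        · rw [Finset.sum_insert h, edgeWeight, add_comm]

structure IsMinWeightConnectedSubgraph (G T : SimpleGraph V) : Prop where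
  le : T ≤ G
  connected : T.Connected
  edgeWeight_le : ∀ H ≤ G, H.Connected → edgeWeight w T ≤ edgeWeight w H

variable {w}

lemma Connected.exists_isMinWeightConnectedSubgraph {G : SimpleGraph V} (hG : G.Connected) :
    ∃ T, IsMinWeightConnectedSubgraph w G T := by
  obtain ⟨T, ⟨hTG, hT⟩, hmin⟩ := Set.exists_min_image {H | H ≤ G ∧ H.Connected} (edgeWeight w)
    (Set.toFinite _) ⟨G, le_rfl, hG⟩
  exact ⟨T, hTG, hT, fun H hHG hH => hmin H ⟨hHG, hH⟩⟩

namespace IsMinWeightConnectedSubgraph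

variable {G T : SimpleGraph V} (hT : IsMinWeightConnectedSubgraph w G T)
include hT

lemma isAcyclic (hw : ∀ ⦃u v : V⦄, u ≠ v → 0 < w s(u, v)) : T.IsAcyclic := by
  refine isAcyclic_iff_forall_adj_isBridge.2 fun u v huv => ?_
  by_contra hbr
  have hle := hT.edgeWeight_le _ ((deleteEdges_le _).trans hT.le)
    (hT.connected.connected_delete_edge_of_not_isBridge hbr)
  rw [edgeWeight_deleteEdges_singleton w huv] at hle
  linarith [hw huv.ne]

lemma weight_le_of_adj_of_adj {v a b : V} (hva : T.Adj v a) (hvb : T.Adj v b) (hab : a ≠ b)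
    (hGab : G.Adj a b) (hw : 0 ≤ w s(a, b)) : w s(v, b) ≤ w s(a, b) := by
  have hvb' : s(v, b) ∈ (T ⊔ edge a b).edgeSet := Or.inl hvb
  have hbridge : ¬(T ⊔ edge a b).IsBridge s(v, b) := by
    rw [isBridge_iff, not_not]
    refine (Adj.reachable (v := a) ?_).trans (Adj.reachable ?_)
    · simp [hva, hva.ne.symm, hab]
    · simp [hab, hva.ne.symm, edge_adj]
  have hle := hT.edgeWeight_le _
    ((deleteEdges_le _).trans (sup_le hT.le ((edge_le_iff _).2 (Or.inr hGab))))
    ((hT.connected.mono le_sup_left).connected_delete_edge_of_not_isBridge hbridge)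
  rw [edgeWeight_deleteEdges_singleton w hvb'] at hle
  linarith [edgeWeight_sup_edge_le w T hw]

lemma weight_le_of_adj_of_adj_of_forall_adj_iff {r : ℝ}
    (hG : ∀ x y, G.Adj x y ↔ x ≠ y ∧ w s(x, y) ≤ r) {v a b : V} (hva : T.Adj v a)
    (hvb : T.Adj v b) (hab : a ≠ b) (hw : 0 ≤ w s(b, a)) : w s(v, a) ≤ w s(a, b) := by
  rw [Sym2.eq_swap (a := a)]
  by_cases hr : w s(b, a) ≤ r
  · exact hT.weight_le_of_adj_of_adj hvb hva hab.symm ((hG b a).2 ⟨hab.symm, hr⟩) hw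
  · exact ((hG v a).1 (hT.le hva)).2.trans (le_of_not_ge hr)

end IsMinWeightConnectedSubgraph

end SimpleGraph

open MeasureTheory Metric Module

lemma Finset.card_mul_pow_le_of_pairwise_le_dist {E : Type*} [NormedAddCommGroup E]
    [NormedSpace ℝ E] [FiniteDimensional ℝ E] {s : Finset E} {c : E} {R δ : ℝ} (hR : 0 ≤ R)
    (hδ : 0 < δ) (hs : (s : Set E) ⊆ closedBall c R)
    (hsep : (s : Set E).Pairwise fun x y => δ ≤ dist x y) :
    s.card * δ ^ finrank ℝ E ≤ (2 * R + δ) ^ finrank ℝ E := by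
  borelize E
  set μ : Measure E := Measure.addHaar
  have hdisj : (s : Set E).PairwiseDisjoint fun x => ball x (δ / 2) :=
    hsep.mono' fun x y h => ball_disjoint_ball (by linarith)
  have hsub : (⋃ x ∈ s, ball x (δ / 2)) ⊆ ball c (R + δ / 2) :=
    Set.iUnion₂_subset fun x hx => ball_subset_ball' (by linarith [mem_closedBall.1 (hs hx)])
  have hvol : s.card * ENNReal.ofReal ((δ / 2) ^ finrank ℝ E) * μ (ball 0 1) ≤
      ENNReal.ofReal ((R + δ / 2) ^ finrank ℝ E) * μ (ball 0 1) := by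
    calc s.card * ENNReal.ofReal ((δ / 2) ^ finrank ℝ E) * μ (ball 0 1)
        = μ (⋃ x ∈ s, ball x (δ / 2)) := by
          rw [measure_biUnion_finset hdisj fun x _ => measurableSet_ball]
          simp [Measure.addHaar_ball_of_pos μ _ (half_pos hδ), mul_assoc]
      _ ≤ μ (ball c (R + δ / 2)) := measure_mono hsub
      _ = _ := Measure.addHaar_ball_of_pos μ _ (by linarith)
  have hcancel := (ENNReal.mul_le_mul_iff_left (measure_ball_pos μ 0 one_pos).ne'
    measure_ball_lt_top.ne).1 hvol
  rw [← ENNReal.ofReal_natCast, ← ENNReal.ofReal_mul (by positivity),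
    ENNReal.ofReal_le_ofReal_iff (by positivity)] at hcancel
  calc s.card * δ ^ finrank ℝ E = 2 ^ finrank ℝ E * (s.card * (δ / 2) ^ finrank ℝ E) := by
        rw [div_pow]; field_simp
    _ ≤ 2 ^ finrank ℝ E * (R + δ / 2) ^ finrank ℝ E := by gcongr
    _ = (2 * R + δ) ^ finrank ℝ E := by rw [← mul_pow]; ring_nf

lemma one_le_dist_inv_norm_smul {F : Type*} [NormedAddCommGroup F] [InnerProductSpace ℝ F]
    {x y : F} (hx : x ≠ 0) (hy : y ≠ 0) (hxy : ‖x‖ ≤ ‖x - y‖) (hyx : ‖y‖ ≤ ‖x - y‖) :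
    1 ≤ dist (‖x‖⁻¹ • x) (‖y‖⁻¹ • y) := by
  have hx' : 0 < ‖x‖ := norm_pos_iff.2 hx
  have hy' : 0 < ‖y‖ := norm_pos_iff.2 hy
  -- polarization: `2⟪x, y⟫ = ‖x‖² + ‖y‖² - ‖x - y‖² ≤ min ‖x‖² ‖y‖²`
  have hinner : 2 * inner ℝ x y ≤ ‖x‖ * ‖y‖ := by
    nlinarith [norm_sub_sq_real x y, mul_nonneg (sub_nonneg.2 hxy) (sub_nonneg.2 hyx)]
  have hsq : dist (‖x‖⁻¹ • x) (‖y‖⁻¹ • y) ^ 2 = 2 - 2 * (inner ℝ x y / (‖x‖ * ‖y‖)) := by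
    rw [dist_eq_norm, norm_sub_sq_real, norm_smul, norm_smul, norm_inv, norm_inv, norm_norm,
      norm_norm, inv_mul_cancel₀ hx'.ne', inv_mul_cancel₀ hy'.ne', real_inner_smul_left,
      real_inner_smul_right]
    field_simp
    ring
  have hcos : inner ℝ x y / (‖x‖ * ‖y‖) ≤ 1 / 2 := by
    rw [div_le_iff₀ (by positivity)]; linarith
  nlinarith [dist_nonneg (x := ‖x‖⁻¹ • x) (y := ‖y‖⁻¹ • y)]

lemma Finset.card_le_nine_of_dist_le_dist {v : EuclideanSpace ℝ (Fin 2)}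
    {s : Finset (EuclideanSpace ℝ (Fin 2))} (hv : v ∉ s)
    (hs : ∀ a ∈ s, ∀ b ∈ s, a ≠ b → dist v a ≤ dist a b) : s.card ≤ 9 := by
  set φ : EuclideanSpace ℝ (Fin 2) → EuclideanSpace ℝ (Fin 2) := fun a => ‖a - v‖⁻¹ • (a - v)
  have hne : ∀ a ∈ s, a - v ≠ 0 := fun a ha => sub_ne_zero.2 (ne_of_mem_of_not_mem ha hv)
  have hsep : ∀ a ∈ s, ∀ b ∈ s, a ≠ b → 1 ≤ dist (φ a) (φ b) := by
    intro a ha b hb hab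
    refine one_le_dist_inv_norm_smul (hne a ha) (hne b hb) ?_ ?_ <;>
      rw [sub_sub_sub_cancel_right, ← dist_eq_norm, ← dist_eq_norm]
    · rw [dist_comm]; exact hs a ha b hb hab
    · rw [dist_comm b, dist_comm a]; exact hs b hb a ha hab.symm
  have hinj : Set.InjOn φ s := fun a ha b hb hφ => by
    by_contra hab
    have := hsep a ha b hb hab
    rw [hφ, dist_self] at this
    norm_num at this
  have hpack := (s.image φ).card_mul_pow_le_of_pairwise_le_dist (c := 0) zero_le_one one_pos ?_ ?_
  · rw [card_image_of_injOn hinj, finrank_euclideanSpace_fin] at hpack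
    norm_num at hpack
    exact_mod_cast hpack
  · simp only [coe_image, Set.image_subset_iff]
    intro a ha
    simp [φ, norm_smul, hne a ha]
  · simp only [coe_image]
    rintro _ ⟨a, ha, rfl⟩ _ ⟨b, hb, rfl⟩ hab
    exact hsep a ha b hb (ne_of_apply_ne φ hab)

theorem stmt_1_general (V : Finset (EuclideanSpace ℝ (Fin 2))) (r : ℝ)
    (G : SimpleGraph V)
    (hG : ∀ v w : V, G.Adj v w ↔ v ≠ w ∧ dist (v : EuclideanSpace ℝ (Fin 2)) (w : EuclideanSpace ℝ (Fin 2)) ≤ r)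
    (hconn : G.Connected) :
    ∃ T : SimpleGraph V, T ≤ G ∧ T.Connected ∧ T.IsAcyclic ∧
      ∀ v : V, (T.neighborSet v).ncard ≤ 26 := by
  classical
  let len : Sym2 V → ℝ := Sym2.lift ⟨fun a b => dist (a : EuclideanSpace ℝ (Fin 2)) b,
    fun _ _ => dist_comm _ _⟩
  obtain ⟨T, hT⟩ := hconn.exists_isMinWeightConnectedSubgraph (w := len)
  refine ⟨T, hT.le, hT.connected,
    hT.isAcyclic fun a b hab => dist_pos.2 (Subtype.coe_ne_coe.2 hab), fun v => ?_⟩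
  rw [← SimpleGraph.coe_neighborFinset, Set.ncard_coe_finset,
    ← Finset.card_map (Function.Embedding.subtype _)]
  refine (Finset.card_le_nine_of_dist_le_dist (v := v) (by simp) ?_).trans (by norm_num)
  simp only [Finset.mem_map, SimpleGraph.mem_neighborFinset, Function.Embedding.subtype_apply]
  rintro _ ⟨a, ha, rfl⟩ _ ⟨b, hb, rfl⟩ hab
  exact hT.weight_le_of_adj_of_adj_of_forall_adj_iff hG ha hb (Subtype.coe_ne_coe.1 hab)
    (dist_nonneg (x := (b : EuclideanSpace ℝ (Fin 2))))

/-- Every connected unit disk graph has a spanning tree of maximum degree at most 26. -/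
theorem stmt_1 (V : Finset (EuclideanSpace ℝ (Fin 2))) (r : ℝ) (hr : 0 < r)
    (G : SimpleGraph V)
    (hG : ∀ v w : V, G.Adj v w ↔ v ≠ w ∧ dist (v : EuclideanSpace ℝ (Fin 2)) (w : EuclideanSpace ℝ (Fin 2)) ≤ r)
    (hconn : G.Connected) :
    ∃ T : SimpleGraph V, T ≤ G ∧ T.Connected ∧ T.IsAcyclic ∧
      ∀ v : V, (T.neighborSet v).ncard ≤ 26 :=
  stmt_1_general V r G hG hconn
end

section
/- A 60-degree circular sector of a disk of radius s has diameter exactly s: any two points in the set {z ∈ ℝ² : ‖z‖ ≤ s, and the angle of z lies in [θ, θ + π/3]} are at Euclidean distance at most s. -/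
/-! By the law of cosines, `‖ρ e^{iφ} - ρ' e^{iφ'}‖² = ρ² + ρ'² - 2ρρ' cos (φ - φ')`. Angles in an
interval of length `π/3` have `cos (φ - φ') ≥ 1/2`, so this is at most
`ρ² + ρ'² - ρρ' ≤ (max ρ ρ')² ≤ s²`. The bound is attained by `0` and `s e^{iθ}`. -/

open Complex Real

def sector (s θ : ℝ) : Set ℂ :=
  {z : ℂ | ∃ ρ ∈ Set.Icc (0:ℝ) s, ∃ φ ∈ Set.Icc θ (θ + π / 3), z = (ρ : ℂ) * exp ((φ : ℂ) * I)}

theorem norm_ofReal_mul_exp_sub_sq (ρ ρ' φ φ' : ℝ) :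
    ‖(ρ : ℂ) * exp ((φ : ℂ) * I) - (ρ' : ℂ) * exp ((φ' : ℂ) * I)‖ ^ 2
      = ρ ^ 2 + ρ' ^ 2 - 2 * ρ * ρ' * Real.cos (φ - φ') := by
  rw [Complex.sq_norm, normSq_apply]
  simp only [sub_re, sub_im, re_ofReal_mul, im_ofReal_mul, exp_ofReal_mul_I_re,
    exp_ofReal_mul_I_im, Real.cos_sub]
  linear_combination ρ ^ 2 * Real.sin_sq_add_cos_sq φ + ρ' ^ 2 * Real.sin_sq_add_cos_sq φ'

theorem half_le_cos_of_abs_le_pi_div_three {x : ℝ} (hx : |x| ≤ π / 3) : 1 / 2 ≤ Real.cos x := by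
  rw [← Real.cos_abs, ← Real.cos_pi_div_three]
  exact Real.cos_le_cos_of_nonneg_of_le_pi (abs_nonneg x) (by linarith [Real.pi_pos]) hx

theorem dist_ofReal_mul_exp_le {s ρ ρ' φ φ' : ℝ} (hρ : ρ ∈ Set.Icc 0 s) (hρ' : ρ' ∈ Set.Icc 0 s)
    (hφ : |φ - φ'| ≤ π / 3) :
    dist ((ρ : ℂ) * exp ((φ : ℂ) * I)) ((ρ' : ℂ) * exp ((φ' : ℂ) * I)) ≤ s := by
  have hcos := half_le_cos_of_abs_le_pi_div_three hφ
  obtain ⟨hρ₀, hρs⟩ := hρ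
  obtain ⟨hρ'₀, hρ's⟩ := hρ'
  refine le_of_pow_le_pow_left₀ two_ne_zero (hρ₀.trans hρs) ?_
  rw [Complex.dist_eq, norm_ofReal_mul_exp_sub_sq]
  nlinarith [mul_nonneg (mul_nonneg hρ₀ hρ'₀) (sub_nonneg.2 hcos),
    mul_nonneg (sub_nonneg.2 hρs) (sub_nonneg.2 hρ's),
    mul_nonneg (sub_nonneg.2 hρs) hρ₀, mul_nonneg (sub_nonneg.2 hρ's) hρ'₀]

theorem dist_le_of_mem_sector {s θ : ℝ} : ∀ z ∈ sector s θ, ∀ w ∈ sector s θ, dist z w ≤ s := by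
  rintro z ⟨ρ, hρ, φ, hφ, rfl⟩ w ⟨ρ', hρ', φ', hφ', rfl⟩
  refine dist_ofReal_mul_exp_le hρ hρ' (abs_le.2 ⟨?_, ?_⟩)
  · linarith [hφ.1, hφ'.2]
  · linarith [hφ.2, hφ'.1]

theorem diam_sector {s : ℝ} (θ : ℝ) (hs : 0 ≤ s) : Metric.diam (sector s θ) = s := by
  have hθ : θ ∈ Set.Icc θ (θ + π / 3) := ⟨le_rfl, by linarith [Real.pi_pos]⟩
  have h0 : (0 : ℂ) ∈ sector s θ := ⟨0, ⟨le_rfl, hs⟩, θ, hθ, by simp⟩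
  have h1 : (s : ℂ) * exp ((θ : ℂ) * I) ∈ sector s θ := ⟨s, ⟨hs, le_rfl⟩, θ, hθ, rfl⟩
  have hb : Bornology.IsBounded (sector s θ) :=
    Metric.isBounded_iff.2 ⟨s, fun _ hx _ hy => dist_le_of_mem_sector _ hx _ hy⟩
  refine le_antisymm (Metric.diam_le_of_forall_dist_le hs dist_le_of_mem_sector) ?_
  calc s = dist ((s : ℂ) * exp ((θ : ℂ) * I)) 0 := by
        simp [norm_exp_ofReal_mul_I, abs_of_nonneg hs]
    _ ≤ Metric.diam (sector s θ) := Metric.dist_le_diam_of_mem hb h1 h0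

/-- A 60-degree sector of a disk of radius `s` has diameter exactly `s`: any two points of the
sector are at distance at most `s`. -/
theorem stmt_15 (s θ : ℝ) (hs : 0 ≤ s) :
    Metric.diam {z : ℂ | ∃ ρ ∈ Set.Icc (0:ℝ) s, ∃ φ ∈ Set.Icc θ (θ + Real.pi / 3),
        z = (ρ : ℂ) * Complex.exp ((φ : ℂ) * Complex.I)} = s ∧
    ∀ z ∈ {z : ℂ | ∃ ρ ∈ Set.Icc (0:ℝ) s, ∃ φ ∈ Set.Icc θ (θ + Real.pi / 3),
        z = (ρ : ℂ) * Complex.exp ((φ : ℂ) * Complex.I)},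
      ∀ w ∈ {z : ℂ | ∃ ρ ∈ Set.Icc (0:ℝ) s, ∃ φ ∈ Set.Icc θ (θ + Real.pi / 3),
        z = (ρ : ℂ) * Complex.exp ((φ : ℂ) * Complex.I)},
        dist z w ≤ s :=
  ⟨diam_sector θ hs, dist_le_of_mem_sector⟩
end
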